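/- arXiv:math/9903114 — 2 statements merged into one kernel-verified Lean document; each statement's English description precedes it below -/
import Mathlib

section
/- Below every divergent series there are continuum many pairwise incompatible divergent series: for every c̄ ∈ divs there exists a family (d̄ˣ)_{x ∈ ℝ} of elements of divs such that d̄ˣ ≤* c̄ for every x ∈ ℝ, and for all x ≠ y the series d̄ˣ and d̄ʸ are incompatible, i.e., there is no ē ∈ divs with ē ≤* d̄ˣ and ē ≤* d̄ʸ. -/
open Filter

/-- `Divs c` says that `c` is a sequence of nonnegative reals converging to `0`
whose series diverges, i.e. `c ∈ divs`. -/
def Divs (c : ℕ → ℝ) : Prop :=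
  (∀ n, 0 ≤ c n) ∧ Tendsto c atTop (nhds 0) ∧
    Tendsto (fun N => ∑ n ∈ Finset.range N, c n) atTop atTop

/-- `LeStar d c` is the eventual dominance relation `d ≤* c`. -/
def LeStar (d c : ℕ → ℝ) : Prop := ∀ᶠ n in atTop, d n ≤ c n

/-!
Cut `ℕ` into consecutive blocks on each of which `c` sums to at least `1`, and take an
almost disjoint family `(A x)_{x ∈ ℝ}` of infinite sets of block indices, e.g. the graphs of
`n ↦ ⌊n x⌋` coded into `ℕ`. Restricting `c` to the blocks indexed by `A x` gives `d x`: it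
covers infinitely many blocks, so it still diverges. A common lower bound `e` of `d x` and
`d y` vanishes outside the finitely many blocks indexed by `A x ∩ A y`, so its series
converges.
-/

open Function Topology

theorem divs_iff_not_summable {c : ℕ → ℝ} :
    Divs c ↔ (∀ n, 0 ≤ c n) ∧ Tendsto c atTop (𝓝 0) ∧ ¬Summable c :=
  and_congr_right fun h0 => and_congr_right fun _ =>
    (not_summable_iff_tendsto_nat_atTop_of_nonneg h0).symm

theorem Divs.indicator {c : ℕ → ℝ} (hc : Divs c) {S : Set ℕ} (hS : ¬Summable (S.indicator c)) :
    Divs (S.indicator c) := by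
  have h0 : ∀ n, 0 ≤ S.indicator c n := Set.indicator_nonneg fun n _ => hc.1 n
  have hle : ∀ n, S.indicator c n ≤ c n := Set.indicator_le_self' fun n _ => hc.1 n
  exact divs_iff_not_summable.2 ⟨h0, squeeze_zero h0 hle hc.2.1, hS⟩

theorem not_divs_of_eventually_eq_zero {e : ℕ → ℝ} (he : ∀ᶠ n in atTop, e n = 0) :
    ¬Divs e := by
  rw [← Nat.cofinite_eq_atTop, eventually_cofinite] at he
  exact fun hdivs => (divs_iff_not_summable.1 hdivs).2.2 (summable_of_hasFiniteSupport he)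

theorem not_exists_divs_le_indicator_of_finite_inter {c : ℕ → ℝ} {S T : Set ℕ}
    (hST : (S ∩ T).Finite) :
    ¬∃ e, Divs e ∧ LeStar e (S.indicator c) ∧ LeStar e (T.indicator c) := by
  rintro ⟨e, he, heS, heT⟩
  refine not_divs_of_eventually_eq_zero ?_ he
  have hout : ∀ᶠ n in atTop, n ∉ S ∩ T := Nat.cofinite_eq_atTop ▸ hST.eventually_cofinite_notMem
  filter_upwards [heS, heT, hout] with n hnS hnT hn
  refine le_antisymm ?_ (he.1 n)
  by_cases hS : n ∈ S
  · rwa [Set.indicator_of_notMem fun hT => hn ⟨hS, hT⟩] at hnT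
  · rwa [Set.indicator_of_notMem hS] at hnS

theorem exists_strictMono_one_le_sum_Ico {c : ℕ → ℝ}
    (hc : Tendsto (fun N => ∑ n ∈ Finset.range N, c n) atTop atTop) :
    ∃ N : ℕ → ℕ, StrictMono N ∧ ∀ k, 1 ≤ ∑ n ∈ Finset.Ico (N k) (N (k + 1)), c n := by
  have hnext : ∀ m, ∃ M, m < M ∧ 1 ≤ ∑ n ∈ Finset.Ico m M, c n := fun m => by
    obtain ⟨M, hM, hmM⟩ := ((hc.eventually_ge_atTop (∑ n ∈ Finset.range m, c n + 1)).and
      (eventually_gt_atTop m)).exists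
    refine ⟨M, hmM, ?_⟩
    rw [Finset.sum_Ico_eq_sub _ hmM.le]
    linarith
  choose next hlt hsum using hnext
  refine ⟨fun k => next^[k] 0, strictMono_nat_of_lt_succ fun k => ?_, fun k => ?_⟩
  · simpa only [iterate_succ_apply'] using hlt _
  · simpa only [iterate_succ_apply'] using hsum _

theorem not_summable_of_pairwise_disjoint_one_le_sum {β ι : Type*} [Infinite ι] {f : β → ℝ}
    (hf : ∀ b, 0 ≤ f b) {B : ι → Finset β} (hB : Pairwise (Disjoint on B))
    (h1 : ∀ i, 1 ≤ ∑ b ∈ B i, f b) : ¬Summable f := by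
  classical
  intro hs
  obtain ⟨t, ht⟩ := Infinite.exists_subset_card_eq ι (⌈∑' b, f b⌉₊ + 1)
  have hcard := calc
    ((⌈∑' b, f b⌉₊ + 1 : ℕ) : ℝ) = ∑ i ∈ t, (1 : ℝ) := by simp [ht]
    _ ≤ ∑ i ∈ t, ∑ b ∈ B i, f b := Finset.sum_le_sum fun i _ => h1 i
    _ = ∑ b ∈ t.biUnion B, f b := (Finset.sum_biUnion (hB.set_pairwise _)).symm
    _ ≤ ∑' b, f b := hs.sum_le_tsum _ fun b _ => hf b
  push_cast at hcard
  linarith [Nat.le_ceil (∑' b, f b)]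

def blockUnion (N : ℕ → ℕ) (A : Set ℕ) : Set ℕ := ⋃ k ∈ A, Set.Ico (N k) (N (k + 1))

theorem blockUnion_inter {N : ℕ → ℕ} (hN : Monotone N) (A B : Set ℕ) :
    blockUnion N A ∩ blockUnion N B = blockUnion N (A ∩ B) := by
  ext n
  simp only [blockUnion, Set.mem_inter_iff, Set.mem_iUnion, exists_prop]
  constructor
  · rintro ⟨⟨k, hkA, hnk⟩, ⟨j, hjB, hnj⟩⟩
    obtain rfl : k = j := by
      by_contra hne
      exact Set.disjoint_left.1 (hN.pairwise_disjoint_on_Ico_succ hne) hnk hnj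
    exact ⟨k, ⟨hkA, hjB⟩, hnk⟩
  · rintro ⟨k, ⟨hkA, hkB⟩, hnk⟩
    exact ⟨⟨k, hkA, hnk⟩, ⟨k, hkB, hnk⟩⟩

theorem Set.Finite.blockUnion {A : Set ℕ} (hA : A.Finite) (N : ℕ → ℕ) :
    (blockUnion N A).Finite :=
  hA.biUnion fun k _ => Set.finite_Ico (N k) (N (k + 1))

theorem not_summable_indicator_blockUnion {c : ℕ → ℝ} (hc : ∀ n, 0 ≤ c n) {N : ℕ → ℕ}
    (hN : Monotone N) (h1 : ∀ k, 1 ≤ ∑ n ∈ Finset.Ico (N k) (N (k + 1)), c n)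
    {A : Set ℕ} (hA : A.Infinite) : ¬Summable ((blockUnion N A).indicator c) := by
  have : Infinite A := hA.to_subtype
  refine not_summable_of_pairwise_disjoint_one_le_sum (Set.indicator_nonneg fun n _ => hc n)
    (B := fun k : A => Finset.Ico (N k) (N (k + 1))) (fun k j hne => ?_) fun k => ?_
  · rw [onFun, ← Finset.disjoint_coe, Finset.coe_Ico, Finset.coe_Ico]
    exact hN.pairwise_disjoint_on_Ico_succ (Subtype.coe_injective.ne hne)
  · rw [Finset.sum_congr rfl fun n hn => Set.indicator_of_mem ?_ c]
    · exact h1 k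
    · exact Set.mem_biUnion k.2 (Finset.mem_Ico.1 hn)

theorem finite_setOf_floor_mul_eq {x y : ℝ} (hxy : x ≠ y) :
    {n : ℕ | ⌊n * x⌋ = ⌊n * y⌋}.Finite := by
  refine (Set.finite_Iic ⌈1 / |x - y|⌉₊).subset fun n hn => ?_
  have hpos : 0 < |x - y| := abs_pos.2 (sub_ne_zero.2 hxy)
  have hlt : n * |x - y| < 1 := by
    simpa [← mul_sub, abs_mul] using Int.abs_sub_lt_one_of_floor_eq_floor hn
  exact Nat.cast_le.1 (((le_div_iff₀ hpos).2 hlt.le).trans (Nat.le_ceil _))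

theorem exists_almostDisjoint_family :
    ∃ A : ℝ → Set ℕ, (∀ x, (A x).Infinite) ∧ Pairwise fun x y => (A x ∩ A y).Finite := by
  let g : ℝ → ℕ → ℕ := fun x n => Encodable.encode (n, ⌊n * x⌋)
  have hg : ∀ x, Injective (g x) := fun x m n h =>
    (Prod.ext_iff.1 (Encodable.encode_injective h)).1
  refine ⟨fun x => Set.range (g x), fun x => Set.infinite_range_of_injective (hg x),
    fun x y hxy => ((finite_setOf_floor_mul_eq hxy).image (g x)).subset ?_⟩
  rintro _ ⟨⟨n, rfl⟩, ⟨m, hm⟩⟩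
  obtain ⟨rfl, h⟩ := Prod.ext_iff.1 (Encodable.encode_injective hm)
  exact ⟨m, h.symm, rfl⟩

/-- Below every divergent series there are continuum many pairwise incompatible
divergent series: a family indexed by `ℝ` of elements of `divs` below `c`,
any two of which have no common lower bound in `divs`. -/
theorem continuum_many_incompatible_below (c : ℕ → ℝ) (hc : Divs c) :
    ∃ d : ℝ → ℕ → ℝ,
      (∀ x, Divs (d x)) ∧ (∀ x, LeStar (d x) c) ∧
      ∀ x y : ℝ, x ≠ y →
        ¬ ∃ e : ℕ → ℝ, Divs e ∧ LeStar e (d x) ∧ LeStar e (d y) := by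
  obtain ⟨N, hN, hblock⟩ := exists_strictMono_one_le_sum_Ico hc.2.2
  obtain ⟨A, hAinf, hAdisj⟩ := exists_almostDisjoint_family
  refine ⟨fun x => (blockUnion N (A x)).indicator c, fun x => ?_, fun x => ?_, fun x y hxy => ?_⟩
  · exact hc.indicator (not_summable_indicator_blockUnion hc.1 hN.monotone hblock (hAinf x))
  · exact Eventually.of_forall (Set.indicator_le_self' fun n _ => hc.1 n)
  · refine not_exists_divs_le_indicator_of_finite_inter ?_
    rw [blockUnion_inter hN.monotone]
    exact (hAdisj hxy).blockUnion N
end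

section
/- Let (m_i)_{i∈ℕ} be a strictly increasing sequence of natural numbers and suppose that for each i ≥ 1 the interval [m_i, m_{i+1}) is partitioned into two sets u_{0,i} and u_{1,i}. Define J = { d̄ ∈ divs : there exists h ∈ {0,1} such that for all but finitely many i ≥ 1, d_ℓ = 0 for every ℓ ∈ u_{h,i} }. Then for every d̄ ∈ divs the following are equivalent: (i) there exists d̄' ∈ J such that every ē ∈ divs with ē ≤* d̄ is compatible with d̄'; (ii) there exists h ∈ {0,1} with ∑_{i≥1} ∑_{ℓ∈u_{h,i}} d_ℓ < ∞. -/
/-!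
Let `S_h = ⋃_{i ≥ 1} u_{h,i}` and `e_h = 1_{S_h} · d`; since `u_{h,i} ⊆ [m_i, m_{i+1})`, the double
sum in (ii) is the series of `e_h` grouped into blocks. If `∑ e_h < ∞`, then `d - e_h` lies in `J`,
and for `e ≤* d` in divs, `min e (d - e_h) ≥ e - e_h` eventually, so it is a common lower bound in
divs. Conversely, if `d' ∈ J` vanishes on the `u_{h,i}` for large `i` and `∑ e_h = ∞`, then
`e_h ∈ divs`, `e_h ≤ d`, and `e_h`, `d'` eventually have disjoint supports, so nothing in divs
lies below both.
-/

open Filter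

/-- Compatibility in `(divs, ≤*)`: a common lower bound in `divs`. -/
def DivsCompat (c d : ℕ → ℝ) : Prop := ∃ e, Divs e ∧ LeStar e c ∧ LeStar e d

open Finset in
theorem summable_sum_Ico_iff {f : ℕ → ℝ} (hf : ∀ n, 0 ≤ f n) {m : ℕ → ℕ} (hm : StrictMono m) :
    Summable (fun i => ∑ n ∈ Ico (m i) (m (i + 1)), f n) ↔ Summable f := by
  set F : ℕ → ℝ := fun N => ∑ n ∈ range N, f n
  have hF : Monotone F := monotone_nat_of_le_succ fun N => by
    simpa [F, sum_range_succ] using hf N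
  have hblocks : ∀ I, ∑ i ∈ range I, ∑ n ∈ Ico (m i) (m (i + 1)), f n = F (m I) - F (m 0) := by
    intro I
    rw [← sum_range_sub fun i => F (m i)]
    exact sum_congr rfl fun i _ => sum_Ico_eq_sub f (hm.monotone i.le_succ)
  have hshift : Tendsto (fun I => F (m I) - F (m 0)) atTop atTop ↔
      Tendsto (fun I => F (m I)) atTop atTop :=
    ⟨fun h => by simpa using tendsto_atTop_add_const_right _ (F (m 0)) h,
      fun h => by simpa [sub_eq_add_neg] using tendsto_atTop_add_const_right _ (-F (m 0)) h⟩
  rw [summable_iff_not_tendsto_nat_atTop_of_nonneg fun i => sum_nonneg fun n _ => hf n,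
    summable_iff_not_tendsto_nat_atTop_of_nonneg hf]
  simp only [hblocks, hshift]
  exact not_congr ⟨tendsto_atTop_of_monotone_of_subseq hF, fun h => h.comp hm.tendsto_atTop⟩

theorem divs_iff {c : ℕ → ℝ} :
    Divs c ↔ (∀ n, 0 ≤ c n) ∧ Tendsto c atTop (nhds 0) ∧ ¬Summable c := by
  refine and_congr_right fun hc => and_congr_right fun _ => ?_
  rw [summable_iff_not_tendsto_nat_atTop_of_nonneg hc, not_not]

theorem Divs.not_summable {c : ℕ → ℝ} (hc : Divs c) : ¬Summable c := (divs_iff.1 hc).2.2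

theorem Divs.of_le_of_not_summable {c d : ℕ → ℝ} (hd : Divs d) (hc : ∀ n, 0 ≤ c n) (hcd : c ≤ d)
    (hsum : ¬Summable c) : Divs c :=
  divs_iff.2 ⟨hc, squeeze_zero hc hcd hd.2.1, hsum⟩

theorem Divs.sub_of_summable {d g : ℕ → ℝ} (hd : Divs d) (hgd : g ≤ d)
    (hg : Summable g) : Divs (d - g) := by
  refine divs_iff.2 ⟨fun n => sub_nonneg.2 (hgd n), ?_, fun h => hd.not_summable ?_⟩
  · have := hd.2.1.sub hg.tendsto_atTop_zero
    rwa [sub_zero] at this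
  · simpa using h.add hg

theorem not_divsCompat_of_eventually_eq_zero {c d : ℕ → ℝ}
    (h : ∀ᶠ n in atTop, c n = 0 ∨ d n = 0) : ¬DivsCompat c d := by
  rintro ⟨e, he, hec, hed⟩
  refine he.not_summable (summable_zero.of_norm_bounded_eventually_nat ?_)
  filter_upwards [h, hec, hed] with n hn hnc hnd
  rw [Real.norm_of_nonneg (he.1 n)]
  rcases hn with hn | hn <;> simp_all

theorem divsCompat_sub_of_summable {d e g : ℕ → ℝ} (he : Divs e) (hed : LeStar e d)
    (hg : ∀ n, 0 ≤ g n) (hgd : g ≤ d) (hsum : Summable g) : DivsCompat e (d - g) := by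
  have hmin : 0 ≤ fun n => min (e n) (d n - g n) :=
    fun n => le_min (he.1 n) (sub_nonneg.2 (hgd n))
  -- where `e ≤ d`, we have `e ≤ min e (d - g) + g`
  refine ⟨fun n => min (e n) (d n - g n), divs_iff.2 ⟨hmin, ?_, fun h => he.not_summable ?_⟩,
    .of_forall fun n => min_le_left _ _, .of_forall fun n => min_le_right _ _⟩
  · exact squeeze_zero hmin (fun n => min_le_left _ _) he.2.1
  · refine (h.add hsum).of_norm_bounded_eventually_nat ?_
    filter_upwards [hed] with n hn
    rw [Real.norm_of_nonneg (he.1 n)]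
    cases min_choice (e n) (d n - g n) <;> linarith [hg n]

theorem Monotone.eq_of_mem_Ico {β : Type*} [Preorder β] {m : ℕ → β} (hm : Monotone m) {i j : ℕ}
    {x : β} (hi : x ∈ Set.Ico (m i) (m (i + 1))) (hj : x ∈ Set.Ico (m j) (m (j + 1))) : i = j := by
  by_contra hij
  exact Set.disjoint_left.1 (hm.pairwise_disjoint_on_Ico_succ hij) hi hj

section Blocks

variable {m : ℕ → ℕ} {v : ℕ → Set ℕ}

theorem indicator_iUnion_apply_of_mem_Ico (hm : Monotone m)
    (hv : ∀ i, v i ⊆ Set.Ico (m i) (m (i + 1))) (d : ℕ → ℝ) {i n : ℕ}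
    (hn : n ∈ Set.Ico (m i) (m (i + 1))) : (⋃ j, v j).indicator d n = (v i).indicator d n := by
  by_cases hni : n ∈ v i
  · rw [Set.indicator_of_mem hni, Set.indicator_of_mem (Set.mem_iUnion_of_mem i hni)]
  · rw [Set.indicator_of_notMem hni, Set.indicator_of_notMem]
    rintro ⟨_, ⟨j, rfl⟩, hnj⟩
    exact hni (hm.eq_of_mem_Ico (hv j hnj) hn ▸ hnj)

theorem summable_sum_indicator_iff (hm : StrictMono m)
    (hv : ∀ i, v i ⊆ Set.Ico (m i) (m (i + 1))) {d : ℕ → ℝ} (hd : ∀ n, 0 ≤ d n) :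
    Summable (fun i => ∑ n ∈ Finset.Ico (m i) (m (i + 1)), (v i).indicator d n) ↔
      Summable ((⋃ i, v i).indicator d) := by
  rw [← summable_sum_Ico_iff (Set.indicator_nonneg fun n _ => hd n) hm]
  refine summable_congr fun i => Finset.sum_congr rfl fun n hn => ?_
  exact (indicator_iUnion_apply_of_mem_Ico hm.monotone hv d (by simpa using hn)).symm

theorem eventually_eq_zero_of_mem_iUnion (hm : Monotone m)
    (hv : ∀ i, v i ⊆ Set.Ico (m i) (m (i + 1))) {g : ℕ → ℝ}
    (hg : ∀ᶠ i in atTop, ∀ n ∈ v i, g n = 0) : ∀ᶠ n in atTop, n ∈ ⋃ i, v i → g n = 0 := by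
  obtain ⟨i₀, hi₀⟩ := eventually_atTop.1 hg
  filter_upwards [eventually_ge_atTop (m i₀)] with n hn hnv
  obtain ⟨j, hnj⟩ := Set.mem_iUnion.1 hnv
  refine hi₀ j ?_ n hnj
  by_contra! hj
  exact (hv j hnj).2.not_ge ((hm hj).trans hn)

end Blocks

theorem memJclosure_iff_general (m : ℕ → ℕ) (hm : StrictMono m) (u : Bool → ℕ → Set ℕ)
    (hcup : ∀ i, 1 ≤ i → u false i ∪ u true i = Set.Ico (m i) (m (i + 1)))
    (d : ℕ → ℝ) (hd : Divs d) :
    (∃ d' : ℕ → ℝ,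
        (Divs d' ∧ ∃ h : Bool, ∀ᶠ i in atTop, ∀ ℓ ∈ u h i, d' ℓ = 0) ∧
        ∀ e : ℕ → ℝ, Divs e → LeStar e d → DivsCompat e d') ↔
      ∃ h : Bool, Summable (fun i : ℕ =>
        ∑ ℓ ∈ Finset.Ico (m (i + 1)) (m (i + 2)), (u h (i + 1)).indicator d ℓ) := by
  have hm' : StrictMono fun i => m (i + 1) := hm.comp fun _ _ => Nat.succ_lt_succ
  have hu : ∀ h i, u h (i + 1) ⊆ Set.Ico (m (i + 1)) (m (i + 2)) := fun h i => by
    rw [← hcup (i + 1) i.succ_pos]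
    cases h
    exacts [Set.subset_union_left, Set.subset_union_right]
  set S : Bool → Set ℕ := fun h => ⋃ i, u h (i + 1)
  have hS₀ : ∀ h n, 0 ≤ (S h).indicator d n := fun h => Set.indicator_nonneg fun n _ => hd.1 n
  have hS : ∀ h, (S h).indicator d ≤ d := fun h => Set.indicator_le_self' fun n _ => hd.1 n
  simp only [summable_sum_indicator_iff hm' (hu _) hd.1]
  constructor
  · rintro ⟨d', ⟨-, h, hd'⟩, hcompat⟩
    refine ⟨h, by_contra fun hsum => ?_⟩
    have hdivs : Divs ((S h).indicator d) := hd.of_le_of_not_summable (hS₀ h) (hS h) hsum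
    refine not_divsCompat_of_eventually_eq_zero ?_ (hcompat _ hdivs (.of_forall (hS h)))
    filter_upwards [eventually_eq_zero_of_mem_iUnion hm'.monotone (hu h)
      ((tendsto_add_atTop_nat 1).eventually hd')] with n hn
    by_cases hnS : n ∈ S h
    exacts [Or.inr (hn hnS), Or.inl (Set.indicator_of_notMem hnS d)]
  · rintro ⟨h, hsum⟩
    refine ⟨d - (S h).indicator d, ⟨hd.sub_of_summable (hS h) hsum, h, ?_⟩,
      fun e he hed => divsCompat_sub_of_summable he hed (hS₀ h) (hS h) hsum⟩
    filter_upwards [eventually_ge_atTop 1] with i hi ℓ hℓ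
    obtain ⟨j, rfl⟩ := Nat.exists_eq_add_of_le' hi
    have hℓS : ℓ ∈ S h := Set.mem_iUnion.2 ⟨j, hℓ⟩
    simp [Set.indicator_of_mem hℓS]

/-- Characterization of the `≈`-closure of
`J = { d ∈ divs : ∃ h, for all but finitely many i ≥ 1, d↾u_{h,i} ≡ 0 }`:
for `d ∈ divs`, there is `d' ∈ J` compatible with every `e ∈ divs`, `e ≤* d`,
iff for some `h ∈ {0,1}` the double sum `∑_{i≥1} ∑_{ℓ∈u_{h,i}} d_ℓ` is finite. -/
theorem memJclosure_iff (m : ℕ → ℕ) (hm : StrictMono m) (u : Bool → ℕ → Set ℕ)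
    (hcup : ∀ i, 1 ≤ i → u false i ∪ u true i = Set.Ico (m i) (m (i + 1)))
    (hcap : ∀ i, 1 ≤ i → u false i ∩ u true i = ∅)
    (d : ℕ → ℝ) (hd : Divs d) :
    (∃ d' : ℕ → ℝ,
        (Divs d' ∧ ∃ h : Bool, ∀ᶠ i in atTop, ∀ ℓ ∈ u h i, d' ℓ = 0) ∧
        ∀ e : ℕ → ℝ, Divs e → LeStar e d → DivsCompat e d') ↔
      ∃ h : Bool, Summable (fun i : ℕ =>
        ∑ ℓ ∈ Finset.Ico (m (i + 1)) (m (i + 2)), (u h (i + 1)).indicator d ℓ) :=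
  memJclosure_iff_general m hm u hcup d hd
end
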